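/- Let n ≥ 2 be an even natural number and 0 < Ω ≤ 1, and set r = 2·Ω^{−1/n}. Then the minimum of the Lyapunov function V over the Euclidean circle { (x₁, x₂) ∈ ℝ² : x₁² + x₂² = r² } equals 4n/( (n+1)²·Ω^{1/n} ), and it is attained at the point (r, 0). -/

import Mathlib

/-!
Put `s = Ω^{-1/n} ≥ 1` and `x₁ = s (a + 1)`. Since `Ω s^n = 1`, the Lyapunov function becomes
`s (2(a+1)/m - 2(a^m+1)/m²) + x₂²` with `m = n + 1`, and on the circle `x₂² = s² (3+a)(1-a)`,
which also confines `a` to `[-3, 1]`. Using `s² ≥ s`, the excess of `V` over its value at `a = 1`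
is at least `s/m²` times `2(1 - a^m) + 2m(a-1) + m²(3+a)(1-a)`, a polynomial that is nonnegative on
`[-3, 1]` for odd `m ≥ 3`: it is so for `m = 3`, and passing from `m` to `m + 2` adds
`(1-a)(2a^m(1+a) + (4m+4)(3+a) - 4)`, whose second factor is positive on `[-3, 1]`.
-/

/-- The Lyapunov function
V(x₁,x₂) = −(2Ω/(n+1)²)((x₁ − Ω^{−1/n})^{n+1} + Ω^{−(n+1)/n}) + (2/(n+1))x₁ + x₂². -/
noncomputable def lyapV (n : ℕ) (Ω : ℝ) (x₁ x₂ : ℝ) : ℝ :=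
  -(2 * Ω / ((n : ℝ) + 1) ^ 2) *
      ((x₁ - Ω ^ (-1 / (n : ℝ))) ^ (n + 1) + Ω ^ (-((n : ℝ) + 1) / (n : ℝ)))
    + (2 / ((n : ℝ) + 1)) * x₁ + x₂ ^ 2

lemma Odd.pow_le_self_of_le_neg_one {m : ℕ} (hm : Odd m) {a : ℝ} (ha : a ≤ -1) : a ^ m ≤ a := by
  have h : -a ≤ (-a) ^ m := le_self_pow₀ (by linarith) hm.pos.ne'
  rw [hm.neg_pow] at h
  linarith

lemma odd_pow_gap_step_pos {m : ℕ} (hm : Odd m) {a : ℝ} (ha : -3 ≤ a) (ha' : a ≤ 1) :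
    0 < 2 * a ^ m * (1 + a) + (4 * m + 4) * (3 + a) - 4 := by
  have hm1 : (1 : ℝ) ≤ m := by exact_mod_cast hm.pos
  have hlin : 8 * (3 + a) ≤ (4 * m + 4) * (3 + a) := by nlinarith
  rcases le_or_gt a (-1) with hneg | hneg
  · have hprod : a * (1 + a) ≤ a ^ m * (1 + a) :=
      mul_le_mul_of_nonpos_right (hm.pow_le_self_of_le_neg_one hneg) (by linarith)
    nlinarith [sq_nonneg (a + 5 / 2)]
  · have hpow : -1 ≤ a ^ m := by
      have habs : |a ^ m| ≤ 1 := by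
        rw [abs_pow]; exact pow_le_one₀ (abs_nonneg a) (abs_le.2 ⟨hneg.le, ha'⟩)
      exact (abs_le.1 habs).1
    nlinarith

lemma odd_pow_gap_nonneg {m : ℕ} (hm : Odd m) (h3 : 3 ≤ m) {a : ℝ} (ha : -3 ≤ a) (ha' : a ≤ 1) :
    0 ≤ 2 * (1 - a ^ m) + 2 * m * (a - 1) + m ^ 2 * (3 + a) * (1 - a) := by
  obtain ⟨k, rfl⟩ : ∃ k, m = 2 * k + 3 := by obtain ⟨j, rfl⟩ := hm; exact ⟨j - 1, by omega⟩
  induction k with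
  | zero =>
    have hfactor : 2 * (1 - a ^ 3) + 2 * 3 * (a - 1) + 3 ^ 2 * (3 + a) * (1 - a)
        = (1 - a) * (2 * (a + 11 / 4) ^ 2 + 63 / 8) := by ring
    push_cast
    rw [hfactor]
    exact mul_nonneg (by linarith) (by positivity)
  | succ k ih =>
    have hstep := odd_pow_gap_step_pos (m := 2 * k + 3) ⟨k + 1, by ring⟩ ha ha'
    have hrec : ∀ m : ℕ, 2 * (1 - a ^ (m + 2)) + 2 * ((m + 2 : ℕ) : ℝ) * (a - 1)
          + ((m + 2 : ℕ) : ℝ) ^ 2 * (3 + a) * (1 - a)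
        = (2 * (1 - a ^ m) + 2 * m * (a - 1) + m ^ 2 * (3 + a) * (1 - a))
          + (1 - a) * (2 * a ^ m * (1 + a) + (4 * m + 4) * (3 + a) - 4) := by
      intro m; push_cast; ring
    rw [show 2 * (k + 1) + 3 = (2 * k + 3) + 2 by ring, hrec]
    exact add_nonneg (ih ⟨k + 1, by ring⟩ (by omega))
      (mul_nonneg (by linarith) hstep.le)

lemma rpow_neg_one_div_pow {Ω : ℝ} (hΩ : 0 < Ω) (n k : ℕ) :
    (Ω ^ (-1 / (n : ℝ))) ^ k = Ω ^ (-(k : ℝ) / n) := by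
  rw [← Real.rpow_natCast, ← Real.rpow_mul hΩ.le]
  ring_nf

lemma lyapV_rescale {n : ℕ} (hn : n ≠ 0) {Ω : ℝ} (hΩ : 0 < Ω) (a y : ℝ) :
    lyapV n Ω (Ω ^ (-1 / (n : ℝ)) * (a + 1)) y
      = Ω ^ (-1 / (n : ℝ)) * (2 * (a + 1) / (n + 1) - 2 * (a ^ (n + 1) + 1) / (n + 1) ^ 2)
        + y ^ 2 := by
  set s := Ω ^ (-1 / (n : ℝ))
  have hsn : Ω * s ^ n = 1 := by
    rw [rpow_neg_one_div_pow hΩ, neg_div, div_self (by exact_mod_cast hn), Real.rpow_neg_one,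
      mul_inv_cancel₀ hΩ.ne']
  have hsn1 : Ω ^ (-((n : ℝ) + 1) / n) = s ^ (n + 1) := by
    rw [rpow_neg_one_div_pow hΩ]; push_cast; rfl
  rw [lyapV, hsn1, show s * (a + 1) - s = s * a by ring]
  linear_combination (-2 * s * (a ^ (n + 1) + 1) / ((n : ℝ) + 1) ^ 2) * hsn

lemma le_rescaled_lyapV_of_sq_eq {n : ℕ} (hn : 2 ≤ n) (hne : Even n) {s a y : ℝ} (hs : 1 ≤ s)
    (hy : y ^ 2 = s ^ 2 * ((3 + a) * (1 - a))) :
    4 * n * s / (n + 1) ^ 2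
      ≤ s * (2 * (a + 1) / (n + 1) - 2 * (a ^ (n + 1) + 1) / (n + 1) ^ 2) + y ^ 2 := by
  have hdisc : 0 ≤ (3 + a) * (1 - a) :=
    nonneg_of_mul_nonneg_right (hy ▸ sq_nonneg y) (by positivity)
  have hgap := odd_pow_gap_nonneg hne.add_one (by omega) (a := a) (by nlinarith) (by nlinarith)
  push_cast at hgap
  have hexcess : s * (2 * (a + 1) / (n + 1) - 2 * (a ^ (n + 1) + 1) / (n + 1) ^ 2) + y ^ 2
        - 4 * n * s / (n + 1) ^ 2
      = s / (n + 1) ^ 2 * (2 * (1 - a ^ (n + 1)) + 2 * (n + 1) * (a - 1)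
          + (n + 1) ^ 2 * (3 + a) * (1 - a)) + s * (s - 1) * ((3 + a) * (1 - a)) := by
    rw [hy]; field_simp; ring
  have hexcess_nonneg : 0 ≤ s / (n + 1) ^ 2 * (2 * (1 - a ^ (n + 1)) + 2 * (n + 1) * (a - 1)
      + (n + 1) ^ 2 * (3 + a) * (1 - a)) + s * (s - 1) * ((3 + a) * (1 - a)) :=
    add_nonneg (mul_nonneg (by positivity) hgap)
      (mul_nonneg (mul_nonneg (by linarith) (by linarith)) hdisc)
  linarith

/-- For n ≥ 2 even and 0 < Ω ≤ 1, with r = 2Ω^{−1/n}, the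
minimum of V over the circle x₁² + x₂² = r² equals 4n/((n+1)²Ω^{1/n}) and is
attained at (r, 0). -/
theorem laneEmden_lyapunov_min_on_circle
    (n : ℕ) (hn : 2 ≤ n) (hne : Even n) (Ω : ℝ) (hΩ : 0 < Ω) (hΩ1 : Ω ≤ 1)
    (r : ℝ) (hr : r = 2 * Ω ^ (-1 / (n : ℝ))) :
    lyapV n Ω r 0 = 4 * (n : ℝ) / (((n : ℝ) + 1) ^ 2 * Ω ^ (1 / (n : ℝ))) ∧
    (∀ x₁ x₂ : ℝ, x₁ ^ 2 + x₂ ^ 2 = r ^ 2 →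
      4 * (n : ℝ) / (((n : ℝ) + 1) ^ 2 * Ω ^ (1 / (n : ℝ))) ≤ lyapV n Ω x₁ x₂) := by
  have hn0 : n ≠ 0 := by omega
  set s := Ω ^ (-1 / (n : ℝ)) with hs
  have hs1 : 1 ≤ s :=
    Real.one_le_rpow_of_pos_of_le_one_of_nonpos hΩ hΩ1 (div_nonpos_of_nonpos_of_nonneg (by norm_num)
      n.cast_nonneg)
  have htarget : 4 * (n : ℝ) / (((n : ℝ) + 1) ^ 2 * Ω ^ (1 / (n : ℝ))) = 4 * n * s / (n + 1) ^ 2 := by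
    rw [hs, neg_div, Real.rpow_neg hΩ.le, div_mul_eq_div_div, div_eq_mul_inv _ (Ω ^ _)]
    ring
  rw [htarget]
  refine ⟨?_, fun x₁ x₂ hx => ?_⟩
  · rw [hr, show 2 * s = s * (1 + 1) by ring, lyapV_rescale hn0 hΩ, ← hs]
    field_simp
    ring
  · obtain ⟨a, rfl⟩ : ∃ a, x₁ = s * (a + 1) := ⟨x₁ / s - 1, by field_simp; ring⟩
    rw [lyapV_rescale hn0 hΩ, ← hs]
    refine le_rescaled_lyapV_of_sq_eq hn hne hs1 ?_
    rw [hr] at hx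
    linear_combination hx
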